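/- arXiv:1506.05271 — 3 statements merged into one kernel-verified Lean document; each statement's English description precedes it below -/
import Mathlib

section
/- Let L > 0, T > 0 and let Ω = (0,2L)². Suppose u, v : [0,T] × ℝ² → ℝ are smooth (C^∞), are 2L-periodic in each of the two spatial variables, and both satisfy the nonlinear subproblem ∂_t w = ∂_x((w_x² + w_y²) w_x) + ∂_y((w_x² + w_y²) w_y) on [0,T] × ℝ². Then for all 0 ≤ s ≤ t ≤ T one has ‖u(t,·) − v(t,·)‖_{L²(Ω)} ≤ ‖u(s,·) − v(s,·)‖_{L²(Ω)}; in particular the L²(Ω)-distance between two smooth periodic solutions is nonincreasing in time. -/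
set_option maxHeartbeats 1000000

open MeasureTheory Set

namespace NLStab

noncomputable section

/-! ### Directional derivative helpers -/

def pd2 (G : ℝ × ℝ → ℝ) (w : ℝ × ℝ) (p : ℝ × ℝ) : ℝ := fderiv ℝ G p w

def pd3 (G : ℝ × ℝ × ℝ → ℝ) (w : ℝ × ℝ × ℝ) (p : ℝ × ℝ × ℝ) : ℝ := fderiv ℝ G p w

lemma pd2_contDiff {G : ℝ × ℝ → ℝ} (hG : ContDiff ℝ (⊤ : ℕ∞) G) (w : ℝ × ℝ) :
    ContDiff ℝ (⊤ : ℕ∞) (pd2 G w) :=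
  (hG.fderiv_right (by simp)).clm_apply contDiff_const

lemma pd3_contDiff {G : ℝ × ℝ × ℝ → ℝ} (hG : ContDiff ℝ (⊤ : ℕ∞) G) (w : ℝ × ℝ × ℝ) :
    ContDiff ℝ (⊤ : ℕ∞) (pd3 G w) :=
  (hG.fderiv_right (by simp)).clm_apply contDiff_const

lemma hasDerivAt_slice_t {G : ℝ × ℝ × ℝ → ℝ} (hG : ContDiff ℝ (⊤ : ℕ∞) G) (t x y : ℝ) :
    HasDerivAt (fun s => G (s, x, y)) (pd3 G (1, 0, 0) (t, x, y)) t := by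
  have h1 : HasDerivAt (fun s : ℝ => ((s, x, y) : ℝ × ℝ × ℝ)) ((1 : ℝ), (0 : ℝ), (0 : ℝ)) t :=
    (hasDerivAt_id t).prodMk ((hasDerivAt_const t x).prodMk (hasDerivAt_const t y))
  exact (hG.differentiable (by simp) (t, x, y)).hasFDerivAt.comp_hasDerivAt t h1

lemma hasDerivAt_slice_x {G : ℝ × ℝ → ℝ} (hG : ContDiff ℝ (⊤ : ℕ∞) G) (x y : ℝ) :
    HasDerivAt (fun a => G (a, y)) (pd2 G (1, 0) (x, y)) x := by
  have h1 : HasDerivAt (fun a : ℝ => ((a, y) : ℝ × ℝ)) ((1 : ℝ), (0 : ℝ)) x :=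
    (hasDerivAt_id x).prodMk (hasDerivAt_const x y)
  exact (hG.differentiable (by simp) (x, y)).hasFDerivAt.comp_hasDerivAt x h1

lemma hasDerivAt_slice_y {G : ℝ × ℝ → ℝ} (hG : ContDiff ℝ (⊤ : ℕ∞) G) (x y : ℝ) :
    HasDerivAt (fun b => G (x, b)) (pd2 G (0, 1) (x, y)) y := by
  have h1 : HasDerivAt (fun b : ℝ => ((x, b) : ℝ × ℝ)) ((0 : ℝ), (1 : ℝ)) y :=
    (hasDerivAt_const y x).prodMk (hasDerivAt_id y)
  exact (hG.differentiable (by simp) (x, y)).hasFDerivAt.comp_hasDerivAt y h1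

lemma pd2_periodic {G : ℝ × ℝ → ℝ} (hG : ContDiff ℝ (⊤ : ℕ∞) G) (c : ℝ × ℝ)
    (hper : ∀ q, G (q + c) = G q) (w p : ℝ × ℝ) : pd2 G w (p + c) = pd2 G w p := by
  have h2 : HasFDerivAt (fun q : ℝ × ℝ => q + c) (ContinuousLinearMap.id ℝ (ℝ × ℝ)) p :=
    (hasFDerivAt_id p).add_const c
  have h1 : HasFDerivAt (fun q => G (q + c)) (fderiv ℝ G (p + c)) p := by
    simpa [Function.comp_def] using (hG.differentiable (by simp) (p + c)).hasFDerivAt.comp p h2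
  have h3 : HasFDerivAt G (fderiv ℝ G (p + c)) p := by
    have h : (fun q => G (q + c)) = G := funext hper
    rwa [h] at h1
  simp only [pd2, ← h3.fderiv]

lemma pd2_sub {A B : ℝ × ℝ → ℝ} (hA : ContDiff ℝ (⊤ : ℕ∞) A) (hB : ContDiff ℝ (⊤ : ℕ∞) B) (w q : ℝ × ℝ) :
    pd2 (fun r => A r - B r) w q = pd2 A w q - pd2 B w q := by
  simp [pd2, fderiv_fun_sub (hA.differentiable (by simp) q) (hB.differentiable (by simp) q)]

lemma pd3_sub {A B : ℝ × ℝ × ℝ → ℝ} (hA : ContDiff ℝ (⊤ : ℕ∞) A) (hB : ContDiff ℝ (⊤ : ℕ∞) B)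
    (w q : ℝ × ℝ × ℝ) :
    pd3 (fun r => A r - B r) w q = pd3 A w q - pd3 B w q := by
  simp [pd3, fderiv_fun_sub (hA.differentiable (by simp) q) (hB.differentiable (by simp) q)]

lemma pd2_const_mul {A : ℝ × ℝ → ℝ} (hA : ContDiff ℝ (⊤ : ℕ∞) A) (c : ℝ) (w q : ℝ × ℝ) :
    pd2 (fun r => c * A r) w q = c * pd2 A w q := by
  simp [pd2, fderiv_const_mul (hA.differentiable (by simp) q) c]

/-! ### Integration helpers -/

lemma integrableOn_square {f : ℝ × ℝ → ℝ} (hf : Continuous f) (l : ℝ) :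
    IntegrableOn f (Ioo 0 l ×ˢ Ioo 0 l) :=
  (hf.continuousOn.integrableOn_compact (isCompact_Icc.prod isCompact_Icc)).mono_set
    (Set.prod_mono Ioo_subset_Icc_self Ioo_subset_Icc_self)

lemma setIntegral_square_swap {s : Set ℝ} {f : ℝ × ℝ → ℝ}
    (hf : IntegrableOn (fun p : ℝ × ℝ => f (p.2, p.1)) (s ×ˢ s)) :
    ∫ p in s ×ˢ s, f p = ∫ y in s, ∫ x in s, f (x, y) := by
  have hf' : Integrable (fun p : ℝ × ℝ => f (p.2, p.1))
      ((volume.restrict s).prod (volume.restrict s)) := by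
    rwa [Measure.prod_restrict, ← Measure.volume_eq_prod]
  have h1 : ∫ p in s ×ˢ s, f p = ∫ p, f (p.2, p.1)
      ∂((volume.restrict s).prod (volume.restrict s)) := by
    rw [Measure.volume_eq_prod, ← Measure.prod_restrict]
    exact (integral_prod_swap f).symm
  rw [h1, integral_prod _ hf']

lemma setIntegral_square {s : Set ℝ} {f : ℝ × ℝ → ℝ} (hf : IntegrableOn f (s ×ˢ s)) :
    ∫ p in s ×ˢ s, f p = ∫ x in s, ∫ y in s, f (x, y) := by
  rw [Measure.volume_eq_prod] at hf ⊢
  exact setIntegral_prod f hf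

lemma ibp_x {l : ℝ} (hl : 0 < l) {F G : ℝ × ℝ → ℝ} (hF : ContDiff ℝ (⊤ : ℕ∞) F) (hG : ContDiff ℝ (⊤ : ℕ∞) G)
    (hFper : ∀ x y, F (x + l, y) = F (x, y)) (hGper : ∀ x y, G (x + l, y) = G (x, y)) :
    ∫ p in Ioo 0 l ×ˢ Ioo 0 l, F p * pd2 G (1, 0) p
      = - ∫ p in Ioo 0 l ×ˢ Ioo 0 l, pd2 F (1, 0) p * G p := by
  have hFc := hF.continuous
  have hGc := hG.continuous
  have hFx := (pd2_contDiff hF (1, 0)).continuous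
  have hGx := (pd2_contDiff hG (1, 0)).continuous
  rw [setIntegral_square_swap (f := fun p => F p * pd2 G (1, 0) p)
      (integrableOn_square ((hFc.mul hGx).comp continuous_swap) l),
    setIntegral_square_swap (f := fun p => pd2 F (1, 0) p * G p)
      (integrableOn_square ((hFx.mul hGc).comp continuous_swap) l), ← integral_neg]
  refine integral_congr_ae (Filter.Eventually.of_forall fun y => ?_)
  dsimp only
  have key := intervalIntegral.integral_mul_deriv_eq_deriv_mul
    (u := fun x => F (x, y)) (v := fun x => G (x, y))
    (u' := fun x => pd2 F (1, 0) (x, y)) (v' := fun x => pd2 G (1, 0) (x, y))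
    (fun x _ => hasDerivAt_slice_x hF x y) (fun x _ => hasDerivAt_slice_x hG x y)
    ((hFx.comp (continuous_id.prodMk continuous_const)).intervalIntegrable 0 l)
    ((hGx.comp (continuous_id.prodMk continuous_const)).intervalIntegrable 0 l)
  have hFb : F (l, y) = F (0, y) := by simpa using hFper 0 y
  have hGb : G (l, y) = G (0, y) := by simpa using hGper 0 y
  rw [← integral_Ioc_eq_integral_Ioo, ← intervalIntegral.integral_of_le hl.le, key]
  beta_reduce
  rw [hFb, hGb, ← integral_Ioc_eq_integral_Ioo, ← intervalIntegral.integral_of_le hl.le]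
  ring

lemma ibp_y {l : ℝ} (hl : 0 < l) {F G : ℝ × ℝ → ℝ} (hF : ContDiff ℝ (⊤ : ℕ∞) F) (hG : ContDiff ℝ (⊤ : ℕ∞) G)
    (hFper : ∀ x y, F (x, y + l) = F (x, y)) (hGper : ∀ x y, G (x, y + l) = G (x, y)) :
    ∫ p in Ioo 0 l ×ˢ Ioo 0 l, F p * pd2 G (0, 1) p
      = - ∫ p in Ioo 0 l ×ˢ Ioo 0 l, pd2 F (0, 1) p * G p := by
  have hFc := hF.continuous
  have hGc := hG.continuous
  have hFy := (pd2_contDiff hF (0, 1)).continuous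
  have hGy := (pd2_contDiff hG (0, 1)).continuous
  rw [setIntegral_square (f := fun p => F p * pd2 G (0, 1) p)
      (integrableOn_square (hFc.mul hGy) l),
    setIntegral_square (f := fun p => pd2 F (0, 1) p * G p)
      (integrableOn_square (hFy.mul hGc) l), ← integral_neg]
  refine integral_congr_ae (Filter.Eventually.of_forall fun x => ?_)
  dsimp only
  have key := intervalIntegral.integral_mul_deriv_eq_deriv_mul
    (u := fun y => F (x, y)) (v := fun y => G (x, y))
    (u' := fun y => pd2 F (0, 1) (x, y)) (v' := fun y => pd2 G (0, 1) (x, y))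
    (fun y _ => hasDerivAt_slice_y hF x y) (fun y _ => hasDerivAt_slice_y hG x y)
    ((hFy.comp (continuous_const.prodMk continuous_id)).intervalIntegrable 0 l)
    ((hGy.comp (continuous_const.prodMk continuous_id)).intervalIntegrable 0 l)
  have hFb : F (x, l) = F (x, 0) := by simpa using hFper x 0
  have hGb : G (x, l) = G (x, 0) := by simpa using hGper x 0
  rw [← integral_Ioc_eq_integral_Ioo, ← intervalIntegral.integral_of_le hl.le, key]
  beta_reduce
  rw [hFb, hGb, ← integral_Ioc_eq_integral_Ioo, ← intervalIntegral.integral_of_le hl.le]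
  ring

lemma key_ineq (a1 a2 b1 b2 : ℝ) :
    0 ≤ (a1 - b1) * ((a1 ^ 2 + a2 ^ 2) * a1 - (b1 ^ 2 + b2 ^ 2) * b1)
      + (a2 - b2) * ((a1 ^ 2 + a2 ^ 2) * a2 - (b1 ^ 2 + b2 ^ 2) * b2) := by
  nlinarith [sq_nonneg (a1 ^ 2 + a2 ^ 2 - b1 ^ 2 - b2 ^ 2),
    mul_nonneg (add_nonneg (add_nonneg (sq_nonneg a1) (sq_nonneg a2))
      (add_nonneg (sq_nonneg b1) (sq_nonneg b2)))
      (add_nonneg (sq_nonneg (a1 - b1)) (sq_nonneg (a2 - b2)))]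

/-! ### The nonlinear flux -/

def Pfun (G : ℝ × ℝ → ℝ) : ℝ × ℝ → ℝ :=
  fun r => (pd2 G (1, 0) r ^ 2 + pd2 G (0, 1) r ^ 2) * pd2 G (1, 0) r

def Qfun (G : ℝ × ℝ → ℝ) : ℝ × ℝ → ℝ :=
  fun r => (pd2 G (1, 0) r ^ 2 + pd2 G (0, 1) r ^ 2) * pd2 G (0, 1) r

lemma Pfun_contDiff {G : ℝ × ℝ → ℝ} (hG : ContDiff ℝ (⊤ : ℕ∞) G) : ContDiff ℝ (⊤ : ℕ∞) (Pfun G) :=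
  (((pd2_contDiff hG (1, 0)).pow 2).add ((pd2_contDiff hG (0, 1)).pow 2)).mul
    (pd2_contDiff hG (1, 0))

lemma Qfun_contDiff {G : ℝ × ℝ → ℝ} (hG : ContDiff ℝ (⊤ : ℕ∞) G) : ContDiff ℝ (⊤ : ℕ∞) (Qfun G) :=
  (((pd2_contDiff hG (1, 0)).pow 2).add ((pd2_contDiff hG (0, 1)).pow 2)).mul
    (pd2_contDiff hG (0, 1))

/-! ### Energy derivative -/

lemma energy_hasDerivAt {l : ℝ} {W : ℝ × ℝ × ℝ → ℝ} (hW : ContDiff ℝ (⊤ : ℕ∞) W) (t₀ : ℝ) :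
    HasDerivAt (fun t => ∫ p in Ioo 0 l ×ˢ Ioo 0 l, W (t, p.1, p.2) ^ 2)
      (∫ p in Ioo 0 l ×ˢ Ioo 0 l,
        2 * W (t₀, p.1, p.2) * pd3 W (1, 0, 0) (t₀, p.1, p.2)) t₀ := by
  have hWc := hW.continuous
  have hWt := (pd3_contDiff hW (1, 0, 0)).continuous
  have hmeas : MeasurableSet (Ioo (0 : ℝ) l ×ˢ Ioo (0 : ℝ) l) :=
    measurableSet_Ioo.prod measurableSet_Ioo
  have hemb : Continuous fun p : ℝ × ℝ => ((t₀, p.1, p.2) : ℝ × ℝ × ℝ) :=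
    continuous_const.prodMk (continuous_fst.prodMk continuous_snd)
  have φcont : Continuous fun q : ℝ × ℝ × ℝ => 2 * W q * pd3 W (1, 0, 0) q :=
    (continuous_const.mul hWc).mul hWt
  obtain ⟨C, hC⟩ := ((isCompact_Icc (a := t₀ - 1) (b := t₀ + 1)).prod
    ((isCompact_Icc (a := (0 : ℝ)) (b := l)).prod
      (isCompact_Icc (a := (0 : ℝ)) (b := l)))).exists_bound_of_continuousOn φcont.continuousOn
  have key := hasDerivAt_integral_of_dominated_loc_of_deriv_le
    (μ := volume.restrict (Ioo 0 l ×ˢ Ioo 0 l))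
    (F := fun t (p : ℝ × ℝ) => W (t, p.1, p.2) ^ 2)
    (F' := fun t (p : ℝ × ℝ) => 2 * W (t, p.1, p.2) * pd3 W (1, 0, 0) (t, p.1, p.2))
    (x₀ := t₀) (bound := fun _ => C) (s := Metric.ball t₀ 1) (Metric.ball_mem_nhds t₀ one_pos)
    (Filter.Eventually.of_forall fun t =>
      (((hWc.comp (continuous_const.prodMk
        (continuous_fst.prodMk continuous_snd))).pow 2)).aestronglyMeasurable)
    (integrableOn_square (f := fun p : ℝ × ℝ => W (t₀, p.1, p.2) ^ 2) ((hWc.comp hemb).pow 2) l)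
    ((φcont.comp hemb).aestronglyMeasurable)
    ?_ ?_ ?_
  · exact key.2
  · -- bound
    filter_upwards [ae_restrict_mem hmeas] with p hp t ht
    have htI : t ∈ Icc (t₀ - 1) (t₀ + 1) := by
      rw [Metric.mem_ball, Real.dist_eq, abs_lt] at ht
      constructor <;> linarith [ht.1, ht.2]
    exact hC (t, p.1, p.2) ⟨htI, Ioo_subset_Icc_self hp.1, Ioo_subset_Icc_self hp.2⟩
  · -- bound integrable
    refine (integrableOn_const_iff (C := C)).2 (Or.inr ?_)
    exact lt_of_le_of_lt
      (measure_mono (Set.prod_mono Ioo_subset_Icc_self Ioo_subset_Icc_self))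
      (isCompact_Icc.prod isCompact_Icc).measure_lt_top
  · -- differentiability
    refine Filter.Eventually.of_forall fun p t _ => ?_
    have h := hasDerivAt_slice_t hW t p.1 p.2
    have h2 := h.fun_mul h
    have h3 : (fun s => W (s, p.1, p.2) ^ 2)
        = fun s => W (s, p.1, p.2) * W (s, p.1, p.2) := by
      funext s; ring
    rw [h3]
    exact h2.congr_deriv (by ring)

/-! ### Dissipativity -/

lemma deriv_nonpos {l : ℝ} (hl : 0 < l) {Ut Vt DtU DtV : ℝ × ℝ → ℝ}
    (hU : ContDiff ℝ (⊤ : ℕ∞) Ut) (hV : ContDiff ℝ (⊤ : ℕ∞) Vt)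
    (hUpx : ∀ x y : ℝ, Ut (x + l, y) = Ut (x, y)) (hUpy : ∀ x y : ℝ, Ut (x, y + l) = Ut (x, y))
    (hVpx : ∀ x y : ℝ, Vt (x + l, y) = Vt (x, y)) (hVpy : ∀ x y : ℝ, Vt (x, y + l) = Vt (x, y))
    (hUpde : ∀ q : ℝ × ℝ, DtU q = pd2 (Pfun Ut) (1, 0) q + pd2 (Qfun Ut) (0, 1) q)
    (hVpde : ∀ q : ℝ × ℝ, DtV q = pd2 (Pfun Vt) (1, 0) q + pd2 (Qfun Vt) (0, 1) q) :
    ∫ p in Ioo 0 l ×ˢ Ioo 0 l, 2 * (Ut p - Vt p) * (DtU p - DtV p) ≤ 0 := by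
  have hmeas : MeasurableSet (Ioo (0 : ℝ) l ×ˢ Ioo (0 : ℝ) l) :=
    measurableSet_Ioo.prod measurableSet_Ioo
  -- abbreviations
  have hPuS := Pfun_contDiff hU
  have hPvS := Pfun_contDiff hV
  have hQuS := Qfun_contDiff hU
  have hQvS := Qfun_contDiff hV
  have hFS : ContDiff ℝ (⊤ : ℕ∞) (fun r => 2 * (Ut r - Vt r)) := contDiff_const.mul (hU.sub hV)
  have hGpS : ContDiff ℝ (⊤ : ℕ∞) (fun r => Pfun Ut r - Pfun Vt r) := hPuS.sub hPvS
  have hGqS : ContDiff ℝ (⊤ : ℕ∞) (fun r => Qfun Ut r - Qfun Vt r) := hQuS.sub hQvS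
  -- periodicity in the pd2-language
  have hUperx : ∀ q : ℝ × ℝ, Ut (q + (l, 0)) = Ut q := by
    rintro ⟨x, y⟩
    show Ut (x + l, y + 0) = Ut (x, y)
    rw [add_zero]; exact hUpx x y
  have hUpery : ∀ q : ℝ × ℝ, Ut (q + (0, l)) = Ut q := by
    rintro ⟨x, y⟩
    show Ut (x + 0, y + l) = Ut (x, y)
    rw [add_zero]; exact hUpy x y
  have hVperx : ∀ q : ℝ × ℝ, Vt (q + (l, 0)) = Vt q := by
    rintro ⟨x, y⟩
    show Vt (x + l, y + 0) = Vt (x, y)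
    rw [add_zero]; exact hVpx x y
  have hVpery : ∀ q : ℝ × ℝ, Vt (q + (0, l)) = Vt q := by
    rintro ⟨x, y⟩
    show Vt (x + 0, y + l) = Vt (x, y)
    rw [add_zero]; exact hVpy x y
  have hux : ∀ w : ℝ × ℝ, ∀ x y : ℝ, pd2 Ut w (x + l, y) = pd2 Ut w (x, y) := by
    intro w x y
    have := pd2_periodic hU (l, 0) hUperx w (x, y)
    simpa using this
  have huy : ∀ w : ℝ × ℝ, ∀ x y : ℝ, pd2 Ut w (x, y + l) = pd2 Ut w (x, y) := by
    intro w x y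
    have := pd2_periodic hU (0, l) hUpery w (x, y)
    simpa using this
  have hvx : ∀ w : ℝ × ℝ, ∀ x y : ℝ, pd2 Vt w (x + l, y) = pd2 Vt w (x, y) := by
    intro w x y
    have := pd2_periodic hV (l, 0) hVperx w (x, y)
    simpa using this
  have hvy : ∀ w : ℝ × ℝ, ∀ x y : ℝ, pd2 Vt w (x, y + l) = pd2 Vt w (x, y) := by
    intro w x y
    have := pd2_periodic hV (0, l) hVpery w (x, y)
    simpa using this
  have hFperx : ∀ x y : ℝ, 2 * (Ut (x + l, y) - Vt (x + l, y)) = 2 * (Ut (x, y) - Vt (x, y)) :=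
    fun x y => by rw [hUpx x y, hVpx x y]
  have hFpery : ∀ x y : ℝ, 2 * (Ut (x, y + l) - Vt (x, y + l)) = 2 * (Ut (x, y) - Vt (x, y)) :=
    fun x y => by rw [hUpy x y, hVpy x y]
  have hGpperx : ∀ x y : ℝ, Pfun Ut (x + l, y) - Pfun Vt (x + l, y)
      = Pfun Ut (x, y) - Pfun Vt (x, y) := by
    intro x y
    simp only [Pfun, hux, hvx]
  have hGqpery : ∀ x y : ℝ, Qfun Ut (x, y + l) - Qfun Vt (x, y + l)
      = Qfun Ut (x, y) - Qfun Vt (x, y) := by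
    intro x y
    simp only [Qfun, huy, hvy]
  -- rewrite the integrand
  have h1 : (fun p : ℝ × ℝ => 2 * (Ut p - Vt p) * (DtU p - DtV p))
      = fun p => (2 * (Ut p - Vt p)) * pd2 (fun r => Pfun Ut r - Pfun Vt r) (1, 0) p
          + (2 * (Ut p - Vt p)) * pd2 (fun r => Qfun Ut r - Qfun Vt r) (0, 1) p := by
    funext q
    rw [hUpde q, hVpde q, pd2_sub hPuS hPvS (1, 0) q, pd2_sub hQuS hQvS (0, 1) q]
    ring
  rw [h1, integral_add
    (integrableOn_square (f := fun p => (2 * (Ut p - Vt p)) * pd2 (fun r => Pfun Ut r - Pfun Vt r) (1, 0) p)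
      ((contDiff_const.mul (hU.sub hV)).continuous.mul
      (pd2_contDiff hGpS (1, 0)).continuous) l)
    (integrableOn_square (f := fun p => (2 * (Ut p - Vt p)) * pd2 (fun r => Qfun Ut r - Qfun Vt r) (0, 1) p)
      ((contDiff_const.mul (hU.sub hV)).continuous.mul
      (pd2_contDiff hGqS (0, 1)).continuous) l),
    ibp_x hl hFS hGpS hFperx hGpperx, ibp_y hl hFS hGqS hFpery hGqpery, ← neg_add,
    ← integral_add
      (integrableOn_square (f := fun p => pd2 (fun r => 2 * (Ut r - Vt r)) (1, 0) p * (Pfun Ut p - Pfun Vt p))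
        ((pd2_contDiff hFS (1, 0)).continuous.mul hGpS.continuous) l)
      (integrableOn_square (f := fun p => pd2 (fun r => 2 * (Ut r - Vt r)) (0, 1) p * (Qfun Ut p - Qfun Vt p))
        ((pd2_contDiff hFS (0, 1)).continuous.mul hGqS.continuous) l)]
  refine neg_nonpos_of_nonneg (setIntegral_nonneg hmeas fun q _ => ?_)
  have e1 : pd2 (fun r => 2 * (Ut r - Vt r)) (1, 0) q
      = 2 * (pd2 Ut (1, 0) q - pd2 Vt (1, 0) q) := by
    rw [pd2_const_mul (hU.sub hV) 2 (1, 0) q, pd2_sub hU hV (1, 0) q]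
  have e2 : pd2 (fun r => 2 * (Ut r - Vt r)) (0, 1) q
      = 2 * (pd2 Ut (0, 1) q - pd2 Vt (0, 1) q) := by
    rw [pd2_const_mul (hU.sub hV) 2 (0, 1) q, pd2_sub hU hV (0, 1) q]
  have hk := key_ineq (pd2 Ut (1, 0) q) (pd2 Ut (0, 1) q) (pd2 Vt (1, 0) q) (pd2 Vt (0, 1) q)
  simp only [e1, e2, Pfun, Qfun]
  nlinarith [hk]

lemma pde_convert {u : ℝ → ℝ → ℝ → ℝ}
    (hu : ContDiff ℝ (⊤ : ℕ∞) (fun p : ℝ × ℝ × ℝ => u p.1 p.2.1 p.2.2)) {t : ℝ}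
    (hpde : ∀ x y : ℝ,
      deriv (fun s => u s x y) t =
        deriv (fun x' =>
          ((deriv (fun a => u t a y) x') ^ 2 + (deriv (fun b => u t x' b) y) ^ 2)
            * deriv (fun a => u t a y) x') x
        + deriv (fun y' =>
          ((deriv (fun a => u t a y') x) ^ 2 + (deriv (fun b => u t x b) y') ^ 2)
            * deriv (fun b => u t x b) y') y) :
    ∀ x y : ℝ, pd3 (fun p : ℝ × ℝ × ℝ => u p.1 p.2.1 p.2.2) (1, 0, 0) (t, x, y)
      = pd2 (Pfun (fun q : ℝ × ℝ => u t q.1 q.2)) (1, 0) (x, y)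
        + pd2 (Qfun (fun q : ℝ × ℝ => u t q.1 q.2)) (0, 1) (x, y) := by
  intro x y
  have hUt : ContDiff ℝ (⊤ : ℕ∞) (fun q : ℝ × ℝ => u t q.1 q.2) :=
    hu.comp (contDiff_const.prodMk contDiff_id)
  have hL : deriv (fun s => u s x y) t
      = pd3 (fun p : ℝ × ℝ × ℝ => u p.1 p.2.1 p.2.2) (1, 0, 0) (t, x, y) :=
    (hasDerivAt_slice_t hu t x y).deriv
  have hdx : ∀ x' y' : ℝ, deriv (fun a => u t a y') x'
      = pd2 (fun q : ℝ × ℝ => u t q.1 q.2) (1, 0) (x', y') :=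
    fun x' y' => (hasDerivAt_slice_x hUt x' y').deriv
  have hdy : ∀ x' y' : ℝ, deriv (fun b => u t x' b) y'
      = pd2 (fun q : ℝ × ℝ => u t q.1 q.2) (0, 1) (x', y') :=
    fun x' y' => (hasDerivAt_slice_y hUt x' y').deriv
  have h1 : (fun x' => ((deriv (fun a => u t a y) x') ^ 2 + (deriv (fun b => u t x' b) y) ^ 2)
        * deriv (fun a => u t a y) x')
      = fun x' => Pfun (fun q : ℝ × ℝ => u t q.1 q.2) (x', y) := by
    funext x'
    rw [hdx x' y, hdy x' y]
    rfl
  have h2 : (fun y' => ((deriv (fun a => u t a y') x) ^ 2 + (deriv (fun b => u t x b) y') ^ 2)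
        * deriv (fun b => u t x b) y')
      = fun y' => Qfun (fun q : ℝ × ℝ => u t q.1 q.2) (x, y') := by
    funext y'
    rw [hdx x y', hdy x y']
    rfl
  have h := hpde x y
  rw [hL, h1, h2, (hasDerivAt_slice_x (Pfun_contDiff hUt) x y).deriv,
    (hasDerivAt_slice_y (Qfun_contDiff hUt) x y).deriv] at h
  exact h

end

end NLStab

open MeasureTheory NLStab

/-- Stability of the exact solution operator of the nonlinear subproblem
`u_t = ∇·(|∇u|²∇u)`: the `L²(Ω)`-distance between two smooth `Ω`-periodic solutions
on `Ω = (0,2L)²` is nonincreasing in time (Proposition 2.1). -/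
theorem nonlinear_subproblem_L2_stability (L T : ℝ) (hL : 0 < L) (hT : 0 < T)
    (u v : ℝ → ℝ → ℝ → ℝ)
    (hu_smooth : ContDiff ℝ (⊤ : ℕ∞) (fun p : ℝ × ℝ × ℝ => u p.1 p.2.1 p.2.2))
    (hv_smooth : ContDiff ℝ (⊤ : ℕ∞) (fun p : ℝ × ℝ × ℝ => v p.1 p.2.1 p.2.2))
    (hu_perx : ∀ t x y : ℝ, u t (x + 2 * L) y = u t x y)
    (hu_pery : ∀ t x y : ℝ, u t x (y + 2 * L) = u t x y)
    (hv_perx : ∀ t x y : ℝ, v t (x + 2 * L) y = v t x y)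
    (hv_pery : ∀ t x y : ℝ, v t x (y + 2 * L) = v t x y)
    (hu_pde : ∀ t ∈ Set.Icc (0 : ℝ) T, ∀ x y : ℝ,
      deriv (fun s => u s x y) t =
        deriv (fun x' =>
          ((deriv (fun a => u t a y) x') ^ 2 + (deriv (fun b => u t x' b) y) ^ 2)
            * deriv (fun a => u t a y) x') x
        + deriv (fun y' =>
          ((deriv (fun a => u t a y') x) ^ 2 + (deriv (fun b => u t x b) y') ^ 2)
            * deriv (fun b => u t x b) y') y)
    (hv_pde : ∀ t ∈ Set.Icc (0 : ℝ) T, ∀ x y : ℝ,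
      deriv (fun s => v s x y) t =
        deriv (fun x' =>
          ((deriv (fun a => v t a y) x') ^ 2 + (deriv (fun b => v t x' b) y) ^ 2)
            * deriv (fun a => v t a y) x') x
        + deriv (fun y' =>
          ((deriv (fun a => v t a y') x) ^ 2 + (deriv (fun b => v t x b) y') ^ 2)
            * deriv (fun b => v t x b) y') y) :
    ∀ s t : ℝ, 0 ≤ s → s ≤ t → t ≤ T →
      Real.sqrt (∫ p in (Set.Ioo 0 (2 * L)) ×ˢ (Set.Ioo 0 (2 * L)),
          (u t p.1 p.2 - v t p.1 p.2) ^ 2)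
        ≤ Real.sqrt (∫ p in (Set.Ioo 0 (2 * L)) ×ˢ (Set.Ioo 0 (2 * L)),
          (u s p.1 p.2 - v s p.1 p.2) ^ 2) := by
  intro s t hs hst htT
  have hl : 0 < 2 * L := by positivity
  have hW : ContDiff ℝ (⊤ : ℕ∞) (fun p : ℝ × ℝ × ℝ => u p.1 p.2.1 p.2.2 - v p.1 p.2.1 p.2.2) :=
    hu_smooth.sub hv_smooth
  have hE : ∀ t₀ : ℝ, HasDerivAt
      (fun τ => ∫ p in (Set.Ioo 0 (2 * L)) ×ˢ (Set.Ioo 0 (2 * L)),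
        (u τ p.1 p.2 - v τ p.1 p.2) ^ 2)
      (∫ p in (Set.Ioo 0 (2 * L)) ×ˢ (Set.Ioo 0 (2 * L)),
        2 * (u t₀ p.1 p.2 - v t₀ p.1 p.2) *
          pd3 (fun p : ℝ × ℝ × ℝ => u p.1 p.2.1 p.2.2 - v p.1 p.2.1 p.2.2)
            (1, 0, 0) (t₀, p.1, p.2)) t₀ :=
    fun t₀ => energy_hasDerivAt hW t₀
  have hanti : AntitoneOn
      (fun τ => ∫ p in (Set.Ioo 0 (2 * L)) ×ˢ (Set.Ioo 0 (2 * L)),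
        (u τ p.1 p.2 - v τ p.1 p.2) ^ 2) (Set.Icc 0 T) := by
    refine antitoneOn_of_deriv_nonpos (convex_Icc 0 T)
      (fun τ _ => (hE τ).continuousAt.continuousWithinAt)
      (fun τ _ => (hE τ).differentiableAt.differentiableWithinAt) ?_
    intro τ hτ
    rw [interior_Icc] at hτ
    have hτIcc : τ ∈ Set.Icc 0 T := Set.Ioo_subset_Icc_self hτ
    rw [(hE τ).deriv]
    have hUt : ContDiff ℝ (⊤ : ℕ∞) (fun q : ℝ × ℝ => u τ q.1 q.2) :=
      hu_smooth.comp (contDiff_const.prodMk contDiff_id)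
    have hVt : ContDiff ℝ (⊤ : ℕ∞) (fun q : ℝ × ℝ => v τ q.1 q.2) :=
      hv_smooth.comp (contDiff_const.prodMk contDiff_id)
    have hconvU := pde_convert hu_smooth (fun x y => hu_pde τ hτIcc x y)
    have hconvV := pde_convert hv_smooth (fun x y => hv_pde τ hτIcc x y)
    have hkey := deriv_nonpos hl hUt hVt
      (fun x y => hu_perx τ x y) (fun x y => hu_pery τ x y)
      (fun x y => hv_perx τ x y) (fun x y => hv_pery τ x y)
      (DtU := fun q : ℝ × ℝ =>
        pd3 (fun p : ℝ × ℝ × ℝ => u p.1 p.2.1 p.2.2) (1, 0, 0) (τ, q.1, q.2))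
      (DtV := fun q : ℝ × ℝ =>
        pd3 (fun p : ℝ × ℝ × ℝ => v p.1 p.2.1 p.2.2) (1, 0, 0) (τ, q.1, q.2))
      (fun q => hconvU q.1 q.2) (fun q => hconvV q.1 q.2)
    have hsplit : (fun p : ℝ × ℝ => 2 * (u τ p.1 p.2 - v τ p.1 p.2) *
          pd3 (fun p : ℝ × ℝ × ℝ => u p.1 p.2.1 p.2.2 - v p.1 p.2.1 p.2.2)
            (1, 0, 0) (τ, p.1, p.2))
        = fun p : ℝ × ℝ => 2 * (u τ p.1 p.2 - v τ p.1 p.2) *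
            (pd3 (fun p : ℝ × ℝ × ℝ => u p.1 p.2.1 p.2.2) (1, 0, 0) (τ, p.1, p.2)
              - pd3 (fun p : ℝ × ℝ × ℝ => v p.1 p.2.1 p.2.2) (1, 0, 0) (τ, p.1, p.2)) := by
      funext q
      rw [pd3_sub hu_smooth hv_smooth (1, 0, 0) (τ, q.1, q.2)]
    rw [hsplit]
    exact hkey
  exact Real.sqrt_le_sqrt (hanti ⟨hs, hst.trans htT⟩ ⟨hs.trans hst, htT⟩ hst)
end

section
/- Let r ≥ 0 be a real number. Then |1 − (r/3)[(1 − c₁)(7 − c₁) + (1 − c₂)(7 − c₂)]| ≤ 1 for all c₁, c₂ ∈ [−1, 1] if and only if r ≤ 3/16. -/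
/-- For `r ≥ 0`, the symbol `ρ = 1 − (r/3)[(1 − c₁)(7 − c₁) + (1 − c₂)(7 − c₂)]` satisfies
`|ρ| ≤ 1` for all `c₁, c₂ ∈ [−1, 1]` if and only if `r ≤ 3/16`. -/
theorem stability_condition_iff (r : ℝ) (hr : 0 ≤ r) :
    (∀ c₁ ∈ Set.Icc (-1 : ℝ) 1, ∀ c₂ ∈ Set.Icc (-1 : ℝ) 1,
      |1 - r / 3 * ((1 - c₁) * (7 - c₁) + (1 - c₂) * (7 - c₂))| ≤ 1) ↔ r ≤ 3 / 16 := by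
  constructor
  · intro h
    have := h (-1) (by constructor <;> norm_num) (-1) (by constructor <;> norm_num)
    rw [abs_le] at this
    linarith [this.1]
  · intro hle c₁ ⟨h1a, h1b⟩ c₂ ⟨h2a, h2b⟩
    rw [abs_le]
    constructor
    · nlinarith [mul_nonneg hr (mul_nonneg (by linarith : (0:ℝ) ≤ 1 - c₁) (by linarith : (0:ℝ) ≤ 7 - c₁)), mul_nonneg hr (mul_nonneg (by linarith : (0:ℝ) ≤ 1 - c₂) (by linarith : (0:ℝ) ≤ 7 - c₂)), mul_nonneg hr (mul_nonneg (by linarith : (0:ℝ) ≤ 1 + c₁) (by linarith : (0:ℝ) ≤ 1 - c₁)), mul_nonneg hr (mul_nonneg (by linarith : (0:ℝ) ≤ 1 + c₂) (by linarith : (0:ℝ) ≤ 1 - c₂)), mul_nonneg (by linarith : (0:ℝ) ≤ 3/16 - r) (mul_nonneg (by linarith : (0:ℝ) ≤ 1 - c₁) (by linarith : (0:ℝ) ≤ 7 - c₁)), mul_nonneg (by linarith : (0:ℝ) ≤ 3/16 - r) (mul_nonneg (by linarith : (0:ℝ) ≤ 1 - c₂) (by linarith : (0:ℝ) ≤ 7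 - c₂))]
    · nlinarith [mul_nonneg hr (mul_nonneg (by linarith : (0:ℝ) ≤ 1 - c₁) (by linarith : (0:ℝ) ≤ 7 - c₁)), mul_nonneg hr (mul_nonneg (by linarith : (0:ℝ) ≤ 1 - c₂) (by linarith : (0:ℝ) ≤ 7 - c₂))]
end

section
/- Let N ≥ 1 be an integer, J = 2N, L > 0, δ > 0, τ ≥ 0, h = L/N, and set x_j = jh, y_k = kh. For λ_{pq} = π²(p²+q²)/L² − δ(π²(p²+q²)/L²)², and for any v : {1,…,J} × {1,…,J} → ℂ, define the discrete Fourier coefficients ṽ_{pq} = (1/J²) Σ_{j=1}^{J} Σ_{k=1}^{J} v_{j,k} exp(−iπ(p x_j + q y_k)/L) for p, q ∈ {−N, …, N−1}, and define w_{j,k} = Σ_{p=−N}^{N−1} Σ_{q=−N}^{N−1} exp(λ_{pq} τ) ṽ_{pq} exp(iπ(p x_j + q y_k)/L). Then h² Σ_{j,k=1}^{J} |w_{j,k}|² ≤ e^{τ/(2δ)} h² Σ_{j,k=1}^{J} |v_{j,k}|², i.e. ‖w‖ ≤ e^{τ/(4δ)} ‖v‖ in the discrete L²-norm ‖u‖ =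 (h² Σ_{j,k} |u_{j,k}|²)^{1/2}. -/
/-!
With `ζ = e^{2πi/2N}` the grid modes are `e^{iπ(p x_j + q y_k)/L} = ζ^{pj+qk}`. Both index ranges
`{1, …, 2N}` and `{-N, …, N-1}` are complete residue systems mod `2N`, so these modes are orthogonal
whether one sums over positions or over frequencies. Hence the inverse and the forward discrete
Fourier transforms both preserve the `ℓ²`-norm up to the factor `(2N)²` (discrete Parseval), and
the multiplier satisfies `|e^{λτ}|² ≤ e^{τ/(2δ)}` because `λ = s - δs² ≤ 1/(4δ)`.
-/

open Complex Finset ComplexConjugate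
open scoped Real

theorem sum_Ico_zpow_eq_zero {K : Type*} [Field K] {z : K} {J : ℕ} (hJ : z ^ J = 1)
    (hz : z ≠ 1) (a : ℤ) : ∑ n ∈ Ico a (a + J), z ^ n = 0 := by
  obtain rfl | hJ0 := eq_or_ne J 0
  · simp
  have hz0 : z ≠ 0 := by rintro rfl; simp [hJ0] at hJ
  rw [Int.Ico_eq_finset_map, sum_map, add_sub_cancel_left, Int.toNat_natCast]
  simp only [Function.Embedding.trans_apply, Nat.castEmbedding_apply, addLeftEmbedding_apply,
    zpow_add₀ hz0, zpow_natCast, ← mul_sum, geom_sum_eq hz, hJ, sub_self, zero_div, mul_zero]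

theorem Int.natCast_dvd_sub_iff_eq_of_mem_Ico {J : ℕ} {b p p' : ℤ} (hp : p ∈ Ico b (b + J))
    (hp' : p' ∈ Ico b (b + J)) : (J : ℤ) ∣ p - p' ↔ p = p' := by
  refine ⟨fun h => ?_, fun h => by simp [h]⟩
  rw [mem_Ico] at hp hp'
  have := Int.eq_zero_of_abs_lt_dvd h (by rw [abs_lt]; omega)
  omega

theorem sum_norm_sq_sum_mul_of_orthogonal {𝕜 ι κ : Type*} [RCLike 𝕜] [DecidableEq κ]
    {S : Finset ι} {T : Finset κ} {F : κ → ι → 𝕜} {C : ℝ}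
    (horth : ∀ p ∈ T, ∀ p' ∈ T, ∑ j ∈ S, F p j * conj (F p' j) = if p = p' then (C : 𝕜) else 0)
    (c : κ → 𝕜) :
    ∑ j ∈ S, ‖∑ p ∈ T, c p * F p j‖ ^ 2 = C * ∑ p ∈ T, ‖c p‖ ^ 2 := by
  apply RCLike.ofReal_injective (K := 𝕜)
  push_cast
  calc ∑ j ∈ S, (‖∑ p ∈ T, c p * F p j‖ : 𝕜) ^ 2
      = ∑ j ∈ S, ∑ p ∈ T, ∑ p' ∈ T, c p * conj (c p') * (F p j * conj (F p' j)) := by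
        simp only [← RCLike.mul_conj, map_sum, map_mul, sum_mul_sum]
        exact sum_congr rfl fun j _ => sum_congr rfl fun p _ => sum_congr rfl fun p' _ => by ring
    _ = ∑ p ∈ T, ∑ p' ∈ T, c p * conj (c p') * ∑ j ∈ S, F p j * conj (F p' j) := by
        simp only [mul_sum]
        rw [sum_comm]
        exact sum_congr rfl fun p _ => sum_comm
    _ = ∑ p ∈ T, (C : 𝕜) * (c p * conj (c p)) := by
        refine sum_congr rfl fun p hp => ?_
        rw [sum_congr rfl fun p' hp' => congrArg _ (horth p hp p' hp')]
        simp [hp, mul_comm]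
    _ = (C : 𝕜) * ∑ p ∈ T, (‖c p‖ : 𝕜) ^ 2 := by simp only [RCLike.mul_conj, mul_sum]

namespace IsPrimitiveRoot

theorem sum_Ico_zpow_sub_mul {K : Type*} [Field K] {ζ : K} {J : ℕ}
    (hζ : IsPrimitiveRoot ζ J) (a : ℤ) {b p p' : ℤ} (hp : p ∈ Ico b (b + J))
    (hp' : p' ∈ Ico b (b + J)) :
    ∑ n ∈ Ico a (a + J), ζ ^ ((p - p') * n) = if p = p' then (J : K) else 0 := by
  split_ifs with h
  · simp [h]
  · have hne : ζ ^ (p - p') ≠ 1 := by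
      rwa [Ne, hζ.zpow_eq_one_iff_dvd, Int.natCast_dvd_sub_iff_eq_of_mem_Ico hp hp']
    have hpow : (ζ ^ (p - p')) ^ J = 1 := by
      rw [← zpow_natCast, ← zpow_mul, mul_comm, zpow_mul, hζ.zpow_eq_one, one_zpow]
    simpa only [zpow_mul] using sum_Ico_zpow_eq_zero hpow hne a

variable {ζ : ℂ} {J : ℕ}

theorem conj_zpow (hζ : IsPrimitiveRoot ζ J) (hJ : J ≠ 0) (n : ℤ) :
    conj (ζ ^ n) = ζ ^ (-n) := by
  rw [map_zpow₀, ← inv_eq_conj (hζ.norm'_eq_one hJ), inv_zpow', zpow_neg]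

theorem sum_zpow_dot_mul_conj (hζ : IsPrimitiveRoot ζ J) (hJ : J ≠ 0) (a b : ℤ) :
    ∀ p ∈ Ico b (b + J) ×ˢ Ico b (b + J), ∀ p' ∈ Ico b (b + J) ×ˢ Ico b (b + J),
      ∑ j ∈ Ico a (a + J) ×ˢ Ico a (a + J),
          ζ ^ (p.1 * j.1 + p.2 * j.2) * conj (ζ ^ (p'.1 * j.1 + p'.2 * j.2))
        = if p = p' then (((J : ℝ) ^ 2 : ℝ) : ℂ) else 0 := by
  rintro ⟨p, q⟩ hpq ⟨p', q'⟩ hpq'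
  rw [mem_product] at hpq hpq'
  have hζ0 : ζ ≠ 0 := hζ.ne_zero hJ
  have split : ∀ j k : ℤ, ζ ^ (p * j + q * k) * conj (ζ ^ (p' * j + q' * k))
      = ζ ^ ((p - p') * j) * ζ ^ ((q - q') * k) := by
    intro j k
    rw [hζ.conj_zpow hJ, ← zpow_add₀ hζ0, ← zpow_add₀ hζ0]
    ring_nf
  simp only [sum_product, split, ← sum_mul_sum, hζ.sum_Ico_zpow_sub_mul a hpq.1 hpq'.1,
    hζ.sum_Ico_zpow_sub_mul a hpq.2 hpq'.2, Prod.mk.injEq]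
  split_ifs <;> simp_all [sq]

theorem sum_norm_sq_idft (hζ : IsPrimitiveRoot ζ J) (hJ : J ≠ 0) (a b : ℤ)
    (c : ℤ → ℤ → ℂ) :
    ∑ j ∈ Ico a (a + J), ∑ k ∈ Ico a (a + J),
        ‖∑ p ∈ Ico b (b + J), ∑ q ∈ Ico b (b + J), c p q * ζ ^ (p * j + q * k)‖ ^ 2
      = J ^ 2 * ∑ p ∈ Ico b (b + J), ∑ q ∈ Ico b (b + J), ‖c p q‖ ^ 2 := by
  have := sum_norm_sq_sum_mul_of_orthogonal (C := (J : ℝ) ^ 2)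
    (hζ.sum_zpow_dot_mul_conj hJ a b) (fun p => c p.1 p.2)
  simpa only [sum_product] using this

theorem sum_norm_sq_dft (hζ : IsPrimitiveRoot ζ J) (hJ : J ≠ 0) (a b : ℤ)
    (v : ℤ → ℤ → ℂ) :
    (J : ℝ) ^ 2 * ∑ p ∈ Ico b (b + J), ∑ q ∈ Ico b (b + J),
        ‖1 / (J : ℂ) ^ 2 * ∑ j ∈ Ico a (a + J), ∑ k ∈ Ico a (a + J),
          v j k * (ζ ^ (p * j + q * k))⁻¹‖ ^ 2
      = ∑ j ∈ Ico a (a + J), ∑ k ∈ Ico a (a + J), ‖v j k‖ ^ 2 := by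
  have hJR : (J : ℝ) ≠ 0 := Nat.cast_ne_zero.mpr hJ
  have := hζ.inv.sum_norm_sq_idft hJ b a v
  simp only [inv_zpow, mul_comm _ (_ : ℤ)] at this
  simp only [norm_mul, norm_pow, norm_div, norm_one, Complex.norm_natCast, mul_pow, ← mul_sum, this]
  field_simp

end IsPrimitiveRoot

theorem exp_grid_mode_eq_zpow {L : ℝ} (hL : L ≠ 0) {N : ℕ} (hN : N ≠ 0) (p q j k : ℤ) :
    exp (I * π * (p * ((j * (L / N) : ℝ) : ℂ) + q * ((k * (L / N) : ℝ) : ℂ)) / L)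
      = exp (2 * π * I / (2 * N : ℕ)) ^ (p * j + q * k) := by
  have hLC : (L : ℂ) ≠ 0 := ofReal_ne_zero.mpr hL
  rw [← exp_int_mul]
  congr 1
  push_cast
  field_simp

theorem norm_sq_exp_symbol_mul_le {δ τ : ℝ} (hδ : 0 < δ) (hτ : 0 ≤ τ) (s : ℝ) (z : ℂ) :
    ‖(Real.exp ((s - δ * s ^ 2) * τ) : ℂ) * z‖ ^ 2 ≤ Real.exp (τ / (2 * δ)) * ‖z‖ ^ 2 := by
  -- `τ / (2δ) - 2 (s - δ s²) τ = τ (2δs - 1)² / (2δ)`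
  have hexp : 2 * ((s - δ * s ^ 2) * τ) ≤ τ / (2 * δ) := by
    rw [le_div_iff₀ (by positivity)]
    nlinarith [mul_nonneg hτ (sq_nonneg (2 * δ * s - 1))]
  rw [norm_mul, norm_real, Real.norm_of_nonneg (Real.exp_pos _).le, mul_pow, ← Real.exp_nat_mul]
  gcongr
  exact_mod_cast hexp

/-- Stability of the pseudo-spectral solver of the linear subproblem
`u_t = −Δu − δΔ²u` (Lemma 3.3): if `w` is obtained from grid data `v` by taking the
discrete Fourier transform, multiplying each coefficient by `e^{λ_{pq}τ}`, and
transforming back, then `‖w‖ ≤ e^{τ/(4δ)} ‖v‖` in the discrete `L²`-norm, i.e.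
`h² Σ |w_{j,k}|² ≤ e^{τ/(2δ)} h² Σ |v_{j,k}|²`. -/
theorem pseudo_spectral_stability (N : ℕ) (hN : 1 ≤ N) (L δ τ : ℝ)
    (hL : 0 < L) (hδ : 0 < δ) (hτ : 0 ≤ τ)
    (h : ℝ) (hh : h = L / N)
    (x : ℤ → ℝ) (hx : ∀ j : ℤ, x j = j * h)
    (lam : ℤ → ℤ → ℝ)
    (hlam : ∀ p q : ℤ, lam p q =
      Real.pi ^ 2 * ((p : ℝ) ^ 2 + (q : ℝ) ^ 2) / L ^ 2
        - δ * (Real.pi ^ 2 * ((p : ℝ) ^ 2 + (q : ℝ) ^ 2) / L ^ 2) ^ 2)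
    (v : ℤ → ℤ → ℂ)
    (vt : ℤ → ℤ → ℂ)
    (hvt : ∀ p q : ℤ, vt p q =
      (1 / ((2 * N : ℕ) : ℂ) ^ 2) * ∑ j ∈ Finset.Icc (1 : ℤ) (2 * N), ∑ k ∈ Finset.Icc (1 : ℤ) (2 * N),
        v j k * Complex.exp (-(Complex.I * Real.pi * ((p : ℂ) * (x j : ℝ) + (q : ℂ) * (x k : ℝ)) / L)))
    (w : ℤ → ℤ → ℂ)
    (hw : ∀ j k : ℤ, w j k =
      ∑ p ∈ Finset.Icc (-(N : ℤ)) ((N : ℤ) - 1), ∑ q ∈ Finset.Icc (-(N : ℤ)) ((N : ℤ) - 1),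
        (Real.exp (lam p q * τ) : ℂ) * vt p q
          * Complex.exp (Complex.I * Real.pi * ((p : ℂ) * (x j : ℝ) + (q : ℂ) * (x k : ℝ)) / L)) :
    h ^ 2 * ∑ j ∈ Finset.Icc (1 : ℤ) (2 * N), ∑ k ∈ Finset.Icc (1 : ℤ) (2 * N), ‖w j k‖ ^ 2
      ≤ Real.exp (τ / (2 * δ))
        * (h ^ 2 * ∑ j ∈ Finset.Icc (1 : ℤ) (2 * N), ∑ k ∈ Finset.Icc (1 : ℤ) (2 * N), ‖v j k‖ ^ 2) := by
  simp only [hx, hh, exp_neg, exp_grid_mode_eq_zpow hL.ne' (by omega : N ≠ 0)] at hvt hw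
  set J := 2 * N
  have hJ : J ≠ 0 := by omega
  have hζ := isPrimitiveRoot_exp J hJ
  set ζ := exp (2 * π * I / J)
  have hA : Icc (1 : ℤ) (2 * N) = Ico (1 : ℤ) (1 + J) := by ext; simp; omega
  have hB : Icc (-(N : ℤ)) (N - 1) = Ico (-(N : ℤ)) (-N + J) := by ext; simp; omega
  rw [hA] at hvt ⊢
  rw [hB] at hw
  have energy_w := hζ.sum_norm_sq_idft hJ 1 (-N) fun p q => Real.exp (lam p q * τ) * vt p q
  have energy_v := hζ.sum_norm_sq_dft hJ 1 (-N) v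
  simp only [← hw, ← hvt] at energy_w energy_v
  have damping : ∑ p ∈ Ico (-(N : ℤ)) (-N + J), ∑ q ∈ Ico (-(N : ℤ)) (-N + J),
        ‖(Real.exp (lam p q * τ) : ℂ) * vt p q‖ ^ 2
      ≤ Real.exp (τ / (2 * δ)) * ∑ p ∈ Ico (-(N : ℤ)) (-N + J), ∑ q ∈ Ico (-(N : ℤ)) (-N + J),
        ‖vt p q‖ ^ 2 := by
    simp only [mul_sum]
    gcongr with p _ q _
    rw [hlam]
    exact norm_sq_exp_symbol_mul_le hδ hτ _ _
  rw [energy_w, ← energy_v]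
  have := mul_le_mul_of_nonneg_left damping (by positivity : 0 ≤ h ^ 2 * (J : ℝ) ^ 2)
  linarith
end
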